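/- Let n ≥ 2, let C ⊆ [0, 1] be the ternary middle-thirds Cantor set, let K = ⋃_{m ∈ ℤⁿ} (m + C × ⋯ × C) (the union over the integer grid of translated Cantor dusts), and let Ω = ℝⁿ \ K. Then: (a) K has Lebesgue measure zero, so Ω fails the measure-density condition: for every a > 1 and δ > 0 there is x ∈ Ω with |K ∩ B(x, a·d(x))| ≤ δ·|B(x, a·d(x))|; and (b) there exist a > 1 and δ > 0 such that for every x ∈ Ω, w(K ∩ B(x, a·d(x))) > δ·d(x), where d(x) = dist(x, K). -/

import Mathlib

open Metric MeasureTheory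

-- `cantorSet` is Mathlib's ternary middle-thirds Cantor set in `[0,1]`.

/-- The union over the integer grid of translated Cantor dusts `m + C × ⋯ × C`. -/
def cantorDustGrid (n : ℕ) : Set (EuclideanSpace ℝ (Fin n)) :=
  ⋃ m : Fin n → ℤ, {y | ∀ i, y i - (m i : ℝ) ∈ cantorSet}

/-- The width of `E` in direction `ν`: `sup {⟪ν, x - y⟫ : x, y ∈ E}` (with `sSup ∅ = 0`). -/
noncomputable def dirWidth {n : ℕ} (E : Set (EuclideanSpace ℝ (Fin n)))
    (ν : EuclideanSpace ℝ (Fin n)) : ℝ :=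
  sSup {w | ∃ x ∈ E, ∃ y ∈ E, w = (inner ℝ ν (x - y) : ℝ)}

/-- The width of `E`: the infimum over unit vectors `ν` of the width of `E` in direction `ν`. -/
noncomputable def setWidth {n : ℕ} (E : Set (EuclideanSpace ℝ (Fin n))) : ℝ :=
  sInf {w | ∃ ν : EuclideanSpace ℝ (Fin n), ‖ν‖ = 1 ∧ w = dirWidth E ν}

open ENNReal

section CantorAux

open Set

lemma one_mem_preCantorSet' (n : ℕ) : (1:ℝ) ∈ preCantorSet n := by
  induction n with
  | zero => simp [preCantorSet]
  | succ n ih => exact Or.inr ⟨1, ih, by norm_num⟩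

lemma one_mem_cantorSet' : (1:ℝ) ∈ cantorSet := Set.mem_iInter.mpr one_mem_preCantorSet'

lemma preCantorSet_antitone' : Antitone preCantorSet := by
  refine antitone_nat_of_succ_le ?_
  intro n
  induction n with
  | zero =>
    rintro x (⟨y, hy, rfl⟩ | ⟨y, hy, rfl⟩) <;>
      simp only [preCantorSet_zero, mem_Icc] at hy ⊢ <;>
      constructor <;> linarith [hy.1, hy.2]
  | succ n ih =>
    rintro x (⟨y, hy, rfl⟩ | ⟨y, hy, rfl⟩)
    · exact Or.inl ⟨y, ih hy, rfl⟩
    · exact Or.inr ⟨y, ih hy, rfl⟩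

lemma div_three_mem_cantorSet' {x : ℝ} (hx : x ∈ cantorSet) : x / 3 ∈ cantorSet := by
  rw [cantorSet, Set.mem_iInter] at hx ⊢
  intro n
  cases n with
  | zero =>
    have h := hx 0
    simp only [preCantorSet_zero, mem_Icc] at h ⊢
    constructor <;> linarith [h.1, h.2]
  | succ n => exact Or.inl ⟨x, hx n, rfl⟩

lemma two_add_div_three_mem_cantorSet' {x : ℝ} (hx : x ∈ cantorSet) :
    (2 + x) / 3 ∈ cantorSet := by
  rw [cantorSet, Set.mem_iInter] at hx ⊢
  intro n
  cases n with
  | zero =>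
    have h := hx 0
    simp only [preCantorSet_zero, mem_Icc] at h ⊢
    constructor <;> linarith [h.1, h.2]
  | succ n => exact Or.inr ⟨x, hx n, rfl⟩

lemma cantorSet_cases' {y : ℝ} (hy : y ∈ cantorSet) :
    3 * y ∈ cantorSet ∨ 3 * y - 2 ∈ cantorSet := by
  have key : ∀ n, 3 * y ∈ preCantorSet n ∨ 3 * y - 2 ∈ preCantorSet n := by
    intro n
    rcases Set.mem_iInter.mp hy (n + 1) with ⟨x, hx, hxy⟩ | ⟨x, hx, hxy⟩
    · left
      have hx3 : x = 3 * y := by simp only at hxy; linarith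
      rwa [← hx3]
    · right
      have hx3 : x = 3 * y - 2 := by simp only at hxy; linarith
      rwa [← hx3]
  by_cases h : ∀ n, 3 * y ∈ preCantorSet n
  · exact Or.inl (Set.mem_iInter.mpr h)
  · push_neg at h
    obtain ⟨N, hN⟩ := h
    refine Or.inr (Set.mem_iInter.mpr fun n => ?_)
    rcases key (max n N) with h1 | h2
    · exact absurd (preCantorSet_antitone' (le_max_right n N) h1) hN
    · exact preCantorSet_antitone' (le_max_left n N) h2

lemma cantorSet_exists_pair' (k : ℕ) :
    ∀ y ∈ cantorSet, ∃ a : ℝ, a ∈ cantorSet ∧ a + (1/3 : ℝ)^k ∈ cantorSet ∧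
      a ≤ y ∧ y ≤ a + (1/3 : ℝ)^k := by
  induction k with
  | zero =>
    intro y hy
    exact ⟨0, zero_mem_cantorSet, by simpa using one_mem_cantorSet',
      (cantorSet_subset_unitInterval hy).1, by simpa using (cantorSet_subset_unitInterval hy).2⟩
  | succ k ih =>
    intro y hy
    rcases cantorSet_cases' hy with h | h
    · obtain ⟨a, ha, ha', h1, h2⟩ := ih _ h
      refine ⟨a / 3, div_three_mem_cantorSet' ha, ?_, by linarith,
        by linarith [pow_succ (1/3:ℝ) k]⟩
      have he : a / 3 + (1/3 : ℝ)^(k+1) = (a + (1/3:ℝ)^k) / 3 := by ring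
      rw [he]; exact div_three_mem_cantorSet' ha'
    · obtain ⟨a, ha, ha', h1, h2⟩ := ih _ h
      refine ⟨(2 + a) / 3, two_add_div_three_mem_cantorSet' ha, ?_, by linarith,
        by linarith [pow_succ (1/3:ℝ) k]⟩
      have he : (2 + a) / 3 + (1/3 : ℝ)^(k+1) = (2 + (a + (1/3:ℝ)^k)) / 3 := by ring
      rw [he]; exact two_add_div_three_mem_cantorSet' ha'

lemma volume_image_div_three' (s : Set ℝ) :
    volume ((· / 3) '' s) = ENNReal.ofReal |(3:ℝ)⁻¹| * volume s := by
  have h : (· / 3) '' s = (fun x : ℝ => 3 * x) ⁻¹' s := by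
    ext z
    constructor
    · rintro ⟨x, hx, rfl⟩
      simpa [mul_div_cancel₀] using hx
    · intro hz
      exact ⟨3 * z, hz, by ring⟩
  rw [h, Real.volume_preimage_mul_left (by norm_num : (3:ℝ) ≠ 0)]

lemma volume_image_two_add_div_three' (s : Set ℝ) :
    volume ((fun x : ℝ => (2 + x) / 3) '' s) = ENNReal.ofReal |(3:ℝ)⁻¹| * volume s := by
  have h : (fun x : ℝ => (2 + x) / 3) '' s = (· / 3) '' ((fun x : ℝ => 2 + x) '' s) := by
    rw [← Set.image_comp]; rfl
  rw [h, volume_image_div_three']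
  congr 1
  have h2 : (fun x : ℝ => 2 + x) '' s = (fun x : ℝ => -2 + x) ⁻¹' s := by
    ext z
    constructor
    · rintro ⟨x, hx, rfl⟩; simpa using hx
    · intro hz; exact ⟨-2 + z, hz, by ring⟩
  rw [h2, measure_preimage_add]

lemma volume_preCantorSet_le' (n : ℕ) : volume (preCantorSet n) ≤ (2/3 : ℝ≥0∞) ^ n := by
  induction n with
  | zero => simp [preCantorSet]
  | succ n ih =>
    have key : ENNReal.ofReal |(3:ℝ)⁻¹| = (3 : ℝ≥0∞)⁻¹ := by
      rw [abs_of_pos (by norm_num : (0:ℝ) < 3⁻¹)]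
      rw [ENNReal.ofReal_inv_of_pos (by norm_num)]
      norm_num
    calc volume (preCantorSet (n+1))
        ≤ volume ((· / 3) '' preCantorSet n) +
            volume ((fun x : ℝ => (2 + x) / 3) '' preCantorSet n) := measure_union_le _ _
      _ = (3 : ℝ≥0∞)⁻¹ * volume (preCantorSet n) + (3 : ℝ≥0∞)⁻¹ * volume (preCantorSet n) := by
          rw [volume_image_div_three', volume_image_two_add_div_three', key]
      _ ≤ (3 : ℝ≥0∞)⁻¹ * (2/3)^n + (3 : ℝ≥0∞)⁻¹ * (2/3)^n := by gcongr
      _ = (2/3 : ℝ≥0∞) ^ (n+1) := by simp only [div_eq_mul_inv, pow_succ]; ring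

lemma volume_cantorSet_zero' : volume cantorSet = 0 := by
  have h : ∀ n, volume cantorSet ≤ (2/3 : ℝ≥0∞) ^ n :=
    fun n => le_trans (measure_mono (Set.iInter_subset _ n)) (volume_preCantorSet_le' n)
  have ht : Filter.Tendsto (fun n : ℕ => (2/3 : ℝ≥0∞) ^ n) Filter.atTop (nhds 0) := by
    apply ENNReal.tendsto_pow_atTop_nhds_zero_of_lt_one
    rw [ENNReal.div_lt_iff (by norm_num) (by norm_num)]
    norm_num
  exact le_antisymm (ge_of_tendsto ht (Filter.Eventually.of_forall h)) zero_le

end CantorAux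

section GridAux

open Set

lemma volume_cantorDustGrid_zero (n : ℕ) (hn : 0 < n) : volume (cantorDustGrid n) = 0 := by
  rw [cantorDustGrid]
  refine measure_iUnion_null fun m => ?_
  have hpre : {y : EuclideanSpace ℝ (Fin n) | ∀ i, y i - (m i : ℝ) ∈ cantorSet} =
      (MeasurableEquiv.toLp 2 (Fin n → ℝ)).symm ⁻¹'
        (Set.pi Set.univ fun i => (fun t => t + (-(m i : ℝ))) ⁻¹' cantorSet) := by
    ext y
    simp only [Set.mem_preimage, Set.mem_pi, Set.mem_univ, forall_true_left, Set.mem_setOf_eq,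
      sub_eq_add_neg]
    rfl
  have hmeas : MeasurableSet (Set.pi Set.univ fun i : Fin n =>
      (fun t : ℝ => t + (-(m i : ℝ))) ⁻¹' cantorSet) := by
    refine MeasurableSet.univ_pi fun i => ?_
    exact isClosed_cantorSet.measurableSet.preimage (measurable_add_const _)
  rw [hpre,
    (EuclideanSpace.volume_preserving_symm_measurableEquiv_toLp (Fin n)).measure_preimage
      hmeas.nullMeasurableSet]
  rw [volume_pi_pi]
  have hz : ∀ i : Fin n, volume ((fun t : ℝ => t + (-(m i : ℝ))) ⁻¹' cantorSet) = 0 := by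
    intro i
    rw [measure_preimage_add_right, volume_cantorSet_zero']
  rw [Finset.prod_congr rfl (fun i _ => hz i), Finset.prod_const, zero_pow]
  simpa using hn.ne'

lemma coord_abs_le_dist' {n : ℕ} (y x : EuclideanSpace ℝ (Fin n)) (i : Fin n) :
    |y i - x i| ≤ dist y x := by
  rw [EuclideanSpace.dist_eq, ← Real.sqrt_sq_eq_abs]
  apply Real.sqrt_le_sqrt
  calc (y i - x i)^2 = dist (y i) (x i)^2 := by rw [Real.dist_eq, sq_abs]
    _ ≤ ∑ j, dist (y j) (x j)^2 :=
      Finset.single_le_sum (f := fun j => dist (y j) (x j)^2)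
        (fun j _ => sq_nonneg _) (Finset.mem_univ i)

lemma dist_le_sqrt_mul' {n : ℕ} (y x : EuclideanSpace ℝ (Fin n)) (r : ℝ) (hr : 0 ≤ r)
    (h : ∀ i, |y i - x i| ≤ r) : dist y x ≤ Real.sqrt n * r := by
  rw [EuclideanSpace.dist_eq]
  have hb : ∑ j, dist (y j) (x j)^2 ≤ (n : ℝ) * r^2 := by
    calc ∑ j, dist (y j) (x j)^2 ≤ ∑ _j : Fin n, r^2 := by
          refine Finset.sum_le_sum fun j _ => ?_
          rw [Real.dist_eq]
          exact sq_le_sq' (by linarith [abs_nonneg (y j - x j)]) (h j)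
      _ = (n : ℝ) * r^2 := by simp [Finset.sum_const, Finset.card_univ]
  calc Real.sqrt (∑ j, dist (y j) (x j)^2) ≤ Real.sqrt ((n:ℝ) * r^2) := Real.sqrt_le_sqrt hb
    _ = Real.sqrt n * r := by
        rw [Real.sqrt_mul (Nat.cast_nonneg n), Real.sqrt_sq hr]

lemma isClosed_cantorDustGrid (n : ℕ) : IsClosed (cantorDustGrid n) := by
  apply LocallyFinite.isClosed_iUnion
  · intro x
    refine ⟨ball x 1, ball_mem_nhds x one_pos, ?_⟩
    have hsub : {m : Fin n → ℤ |
        ({y : EuclideanSpace ℝ (Fin n) | ∀ i, y i - (m i : ℝ) ∈ cantorSet} ∩ ball x 1).Nonempty}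
        ⊆ {m : Fin n → ℤ | ∀ i, m i ∈ Icc (⌊x i⌋ - 2) (⌊x i⌋ + 2)} := by
      rintro m ⟨y, hy, hyb⟩
      intro i
      have h01 : y i - (m i : ℝ) ∈ Set.Icc (0:ℝ) 1 := cantorSet_subset_unitInterval (hy i)
      have hdist : |y i - x i| ≤ dist y x := coord_abs_le_dist' y x i
      have hb : dist y x < 1 := mem_ball.mp hyb
      have hfl : (⌊x i⌋ : ℝ) ≤ x i := Int.floor_le _
      have hfu : x i < ⌊x i⌋ + 1 := Int.lt_floor_add_one _
      have habs := abs_le.mp (hdist.trans hb.le)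
      constructor
      · have : ((⌊x i⌋ - 2 : ℤ) : ℝ) ≤ (m i : ℝ) := by push_cast; linarith [h01.1, h01.2]
        exact_mod_cast this
      · have : (m i : ℝ) ≤ ((⌊x i⌋ + 2 : ℤ) : ℝ) := by push_cast; linarith [h01.1, h01.2]
        exact_mod_cast this
    refine Set.Finite.subset ?_ hsub
    have := Set.Finite.pi (fun i : Fin n => Set.finite_Icc (⌊x i⌋ - 2) (⌊x i⌋ + 2))
    apply this.subset
    intro m hm
    simp only [Set.mem_pi, Set.mem_univ, forall_true_left]
    exact fun i => hm i
  · intro m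
    have h : {y : EuclideanSpace ℝ (Fin n) | ∀ i, y i - (m i : ℝ) ∈ cantorSet} =
        ⋂ i, (fun y : EuclideanSpace ℝ (Fin n) => y i - (m i : ℝ)) ⁻¹' cantorSet := by
      ext y; simp [Set.mem_iInter]
    rw [h]
    exact isClosed_iInter fun i =>
      isClosed_cantorSet.preimage ((EuclideanSpace.proj i).continuous.sub continuous_const)

lemma floorPoint_mem_cantorDustGrid {n : ℕ} (x : EuclideanSpace ℝ (Fin n)) :
    (WithLp.toLp 2 (fun i => (⌊x i⌋ : ℝ)) : EuclideanSpace ℝ (Fin n)) ∈ cantorDustGrid n :=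
  Set.mem_iUnion.mpr ⟨fun i => ⌊x i⌋, fun i => by simpa using zero_mem_cantorSet⟩

lemma cantorDustGrid_nonempty (n : ℕ) : (cantorDustGrid n).Nonempty :=
  ⟨_, floorPoint_mem_cantorDustGrid 0⟩

lemma infDist_le_sqrt {n : ℕ} (x : EuclideanSpace ℝ (Fin n)) :
    infDist x (cantorDustGrid n) ≤ Real.sqrt n := by
  have h := infDist_le_dist_of_mem (x := x) (floorPoint_mem_cantorDustGrid x)
  refine h.trans ?_
  have := dist_le_sqrt_mul' x (WithLp.toLp 2 (fun i => (⌊x i⌋ : ℝ)) : EuclideanSpace ℝ (Fin n)) 1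
    zero_le_one (fun i => ?_)
  · simpa using this
  · have hfl : (⌊x i⌋ : ℝ) ≤ x i := Int.floor_le _
    have hfu : x i < ⌊x i⌋ + 1 := Int.lt_floor_add_one _
    rw [abs_le]
    constructor <;> [linarith; linarith]

end GridAux

lemma sum_abs_ge_one {n : ℕ} (ν : EuclideanSpace ℝ (Fin n)) (hν : ‖ν‖ = 1) :
    1 ≤ ∑ i, |ν i| := by
  have hsum : ∑ i, |ν i| ^ 2 = 1 := by
    have h := hν
    rw [EuclideanSpace.norm_eq, Real.sqrt_eq_one] at h
    simpa [Real.norm_eq_abs] using h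
  set S := ∑ i, |ν i| with hS
  have hS0 : 0 ≤ S := Finset.sum_nonneg fun i _ => abs_nonneg _
  have hle : ∑ i, |ν i| ^ 2 ≤ S * S := by
    calc ∑ i, |ν i| ^ 2 = ∑ i, |ν i| * |ν i| := by simp [sq]
      _ ≤ ∑ i, |ν i| * S :=
          Finset.sum_le_sum fun i _ => mul_le_mul_of_nonneg_left
            (Finset.single_le_sum (f := fun j => |ν j|) (fun j _ => abs_nonneg _)
              (Finset.mem_univ i)) (abs_nonneg _)
      _ = S * S := by rw [← Finset.sum_mul]
  nlinarith [hsum, hle, hS0]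

lemma width_lower_bound (n : ℕ) (hn : 2 ≤ n) (x : EuclideanSpace ℝ (Fin n))
    (hx : x ∈ (cantorDustGrid n)ᶜ) :
    setWidth (cantorDustGrid n ∩
        ball x ((Real.sqrt n + 3) * infDist x (cantorDustGrid n))) >
      (6 * Real.sqrt n)⁻¹ * infDist x (cantorDustGrid n) := by
  set K := cantorDustGrid n with hK
  set d := infDist x K with hd
  have hKne : K.Nonempty := cantorDustGrid_nonempty n
  have hsn : (1:ℝ) ≤ Real.sqrt n := by
    rw [show (1:ℝ) = Real.sqrt 1 by simp]
    exact Real.sqrt_le_sqrt (by exact_mod_cast Nat.one_le_of_lt hn)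
  have hsn0 : (0:ℝ) < Real.sqrt n := lt_of_lt_of_le one_pos hsn
  have hd0 : 0 < d := ((isClosed_cantorDustGrid n).notMem_iff_infDist_pos hKne).1 hx
  have hdsn : d ≤ Real.sqrt n := infDist_le_sqrt x
  -- choose a nearby point y of K
  obtain ⟨y, hyK, hxy⟩ := (infDist_lt_iff hKne).mp (show infDist x K < 2 * d by linarith)
  obtain ⟨m, hm⟩ := Set.mem_iUnion.mp hyK
  -- choose the scale k
  have hex2 : ∃ k : ℕ, (1/3 : ℝ)^k ≤ d ∧ d / (3 * Real.sqrt n) ≤ (1/3 : ℝ)^k := by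
    have hex : ∃ k : ℕ, (1/3 : ℝ)^k ≤ d := by
      obtain ⟨k, hk⟩ := exists_pow_lt_of_lt_one hd0 (by norm_num : (1/3:ℝ) < 1)
      exact ⟨k, hk.le⟩
    refine ⟨Nat.find hex, Nat.find_spec hex, ?_⟩
    rcases Nat.eq_zero_or_pos (Nat.find hex) with h0 | hpos
    · rw [h0, pow_zero, div_le_one (by positivity)]
      nlinarith
    · obtain ⟨j, hj⟩ := Nat.exists_eq_succ_of_ne_zero hpos.ne'
      have hmin : ¬ ((1/3 : ℝ)^j ≤ d) := by
        apply Nat.find_min hex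
        omega
      push_neg at hmin
      have hlt : d / 3 < (1/3 : ℝ) ^ Nat.find hex := by
        rw [hj, pow_succ]
        linarith
      calc d / (3 * Real.sqrt n) ≤ d / 3 := by
            apply div_le_div_of_nonneg_left hd0.le (by norm_num)
            nlinarith
        _ ≤ _ := hlt.le
  obtain ⟨k, hk, hck0⟩ := hex2
  set c := (1/3 : ℝ)^k with hc
  have hc0 : 0 < c := pow_pos (by norm_num) k
  have hck : d / (3 * Real.sqrt n) ≤ c := hck0
  -- corner data in each coordinate
  have hpair := fun i => cantorSet_exists_pair' k _ (hm i)
  choose a haC haC' ha1 ha2 using hpair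
  set A := Real.sqrt n + 3 with hA
  set E := K ∩ ball x (A * d) with hE
  -- lower bound for dirWidth in every unit direction
  have key : ∀ ν : EuclideanSpace ℝ (Fin n), ‖ν‖ = 1 →
      d / (3 * Real.sqrt n) ≤ dirWidth E ν := by
    intro ν hν
    set p : EuclideanSpace ℝ (Fin n) :=
      WithLp.toLp 2 (fun i => (m i : ℝ) + a i + (if 0 ≤ ν i then c else 0)) with hp
    set q : EuclideanSpace ℝ (Fin n) :=
      WithLp.toLp 2 (fun i => (m i : ℝ) + a i + (if 0 ≤ ν i then 0 else c)) with hq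
    have hpC : p ∈ K := by
      refine Set.mem_iUnion.mpr ⟨m, fun i => ?_⟩
      show ((m i : ℝ) + a i + (if 0 ≤ ν i then c else 0)) - (m i : ℝ) ∈ cantorSet
      split_ifs with h
      · convert haC' i using 1; ring
      · convert haC i using 1; ring
    have hqC : q ∈ K := by
      refine Set.mem_iUnion.mpr ⟨m, fun i => ?_⟩
      show ((m i : ℝ) + a i + (if 0 ≤ ν i then 0 else c)) - (m i : ℝ) ∈ cantorSet
      split_ifs with h
      · convert haC i using 1; ring
      · convert haC' i using 1; ring
    have hcoordp : ∀ i, |p i - y i| ≤ c := by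
      intro i
      have h1 := ha1 i
      have h2 := ha2 i
      show |((m i : ℝ) + a i + (if 0 ≤ ν i then c else 0)) - y i| ≤ c
      rw [abs_le]
      split_ifs with h <;> constructor <;> linarith
    have hcoordq : ∀ i, |q i - y i| ≤ c := by
      intro i
      have h1 := ha1 i
      have h2 := ha2 i
      show |((m i : ℝ) + a i + (if 0 ≤ ν i then 0 else c)) - y i| ≤ c
      rw [abs_le]
      split_ifs with h <;> constructor <;> linarith
    have hdp : dist p y ≤ Real.sqrt n * c := dist_le_sqrt_mul' p y c hc0.le hcoordp
    have hdq : dist q y ≤ Real.sqrt n * c := dist_le_sqrt_mul' q y c hc0.le hcoordq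
    have hpball : p ∈ ball x (A * d) := by
      rw [mem_ball]
      calc dist p x ≤ dist p y + dist y x := dist_triangle _ _ _
        _ ≤ Real.sqrt n * c + dist y x := by linarith
        _ < Real.sqrt n * d + 2 * d := by
            rw [dist_comm]
            have : Real.sqrt n * c ≤ Real.sqrt n * d := by nlinarith
            linarith
        _ ≤ A * d := by rw [hA]; nlinarith
    have hqball : q ∈ ball x (A * d) := by
      rw [mem_ball]
      calc dist q x ≤ dist q y + dist y x := dist_triangle _ _ _
        _ ≤ Real.sqrt n * c + dist y x := by linarith
        _ < Real.sqrt n * d + 2 * d := by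
            rw [dist_comm]
            have : Real.sqrt n * c ≤ Real.sqrt n * d := by nlinarith
            linarith
        _ ≤ A * d := by rw [hA]; nlinarith
    -- the witness value
    have hinner : (inner ℝ ν (p - q) : ℝ) = (∑ i, |ν i|) * c := by
      rw [PiLp.inner_apply]
      rw [Finset.sum_mul]
      apply Finset.sum_congr rfl
      intro i _
      have hsub : (p - q) i = p i - q i := by simp
      have hri : (inner ℝ (ν i) ((p - q) i) : ℝ) = ν i * ((p - q) i) := Real.inner_apply _ _
      rw [hri, hsub]
      show ν i * (((m i : ℝ) + a i + (if 0 ≤ ν i then c else 0)) -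
        ((m i : ℝ) + a i + (if 0 ≤ ν i then 0 else c))) = |ν i| * c
      split_ifs with h
      · rw [abs_of_nonneg h]; ring
      · rw [abs_of_neg (not_le.mp h)]; ring
    have hbdd : BddAbove {w | ∃ u ∈ E, ∃ v ∈ E, w = (inner ℝ ν (u - v) : ℝ)} := by
      refine ⟨2 * (A * d), ?_⟩
      rintro w ⟨u, ⟨_, hu⟩, v, ⟨_, hv⟩, rfl⟩
      calc (inner ℝ ν (u - v) : ℝ) ≤ ‖ν‖ * ‖u - v‖ := real_inner_le_norm _ _
        _ = dist u v := by rw [hν, one_mul, dist_eq_norm]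
        _ ≤ dist u x + dist x v := dist_triangle _ _ _
        _ ≤ 2 * (A * d) := by
            have h1 : dist u x < A * d := mem_ball.mp hu
            have h2 : dist x v < A * d := by rw [dist_comm]; exact mem_ball.mp hv
            linarith
    have hmem : (inner ℝ ν (p - q) : ℝ) ∈ {w | ∃ u ∈ E, ∃ v ∈ E, w = (inner ℝ ν (u - v) : ℝ)} :=
      ⟨p, ⟨hpC, hpball⟩, q, ⟨hqC, hqball⟩, rfl⟩
    have hW : d / (3 * Real.sqrt n) ≤ (inner ℝ ν (p - q) : ℝ) := by
      rw [hinner]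
      have hS := sum_abs_ge_one ν hν
      calc d / (3 * Real.sqrt n) ≤ c := hck
        _ = 1 * c := (one_mul c).symm
        _ ≤ (∑ i, |ν i|) * c := by nlinarith
    exact hW.trans (le_csSup hbdd hmem)
  -- conclude for setWidth
  have hn0 : 0 < n := by omega
  have i0 : Fin n := ⟨0, hn0⟩
  have hν0 : ‖(EuclideanSpace.single i0 (1:ℝ) : EuclideanSpace ℝ (Fin n))‖ = 1 := by
    rw [EuclideanSpace.norm_single]; norm_num
  have hWne : {w | ∃ ν : EuclideanSpace ℝ (Fin n), ‖ν‖ = 1 ∧ w = dirWidth E ν}.Nonempty :=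
    ⟨dirWidth E (EuclideanSpace.single i0 (1:ℝ)), _, hν0, rfl⟩
  have hinf : d / (3 * Real.sqrt n) ≤ setWidth E := by
    apply le_csInf hWne
    rintro b ⟨ν, hν, rfl⟩
    exact key ν hν
  have : (6 * Real.sqrt n)⁻¹ * d < d / (3 * Real.sqrt n) := by
    rw [inv_mul_eq_div]
    apply div_lt_div_of_pos_left hd0 (by positivity)
    nlinarith
  calc (6 * Real.sqrt n)⁻¹ * d < d / (3 * Real.sqrt n) := this
    _ ≤ setWidth E := hinf

/-- For `n ≥ 2`, the grid of Cantor dusts `K` has Lebesgue measure zero, so `Ω = ℝⁿ \ K` fails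
the measure-density condition for every `a > 1`, `δ > 0`; yet there exist `a > 1` and `δ > 0`
such that `w(K ∩ B(x, a·d(x))) > δ·d(x)` for every `x ∈ Ω`, where `d(x) = dist(x, K)`. -/
theorem cantor_dust_separating_example (n : ℕ) (hn : 2 ≤ n) :
    volume (cantorDustGrid n) = 0 ∧
    (∀ a > (1:ℝ), ∀ δ > (0:ℝ), ∃ x ∈ (cantorDustGrid n)ᶜ,
      volume (cantorDustGrid n ∩ ball x (a * infDist x (cantorDustGrid n))) ≤
        ENNReal.ofReal δ * volume (ball x (a * infDist x (cantorDustGrid n)))) ∧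
    (∃ a > (1:ℝ), ∃ δ > (0:ℝ), ∀ x ∈ (cantorDustGrid n)ᶜ,
      setWidth (cantorDustGrid n ∩ ball x (a * infDist x (cantorDustGrid n))) >
        δ * infDist x (cantorDustGrid n)) := by
  have hn0 : 0 < n := by omega
  have hvol := volume_cantorDustGrid_zero n hn0
  have hsn : (1:ℝ) ≤ Real.sqrt n := by
    rw [show (1:ℝ) = Real.sqrt 1 by simp]
    exact Real.sqrt_le_sqrt (by exact_mod_cast Nat.one_le_of_lt hn)
  refine ⟨hvol, ?_, ?_⟩
  · intro a _ δ _
    have hne : (cantorDustGrid n)ᶜ.Nonempty := by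
      rw [Set.nonempty_compl]
      intro h
      rw [h] at hvol
      exact (isOpen_univ.measure_ne_zero volume Set.univ_nonempty) hvol
    obtain ⟨x, hx⟩ := hne
    refine ⟨x, hx, ?_⟩
    calc volume (cantorDustGrid n ∩ ball x (a * infDist x (cantorDustGrid n)))
        ≤ volume (cantorDustGrid n) := measure_mono Set.inter_subset_left
      _ = 0 := hvol
      _ ≤ _ := zero_le
  · exact ⟨Real.sqrt n + 3, by linarith, (6 * Real.sqrt n)⁻¹,
      by positivity, fun x hx => width_lower_bound n hn x hx⟩
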